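/- If a partition λ decomposes as a word in ρ₁ and ψ₂ applied to the empty partition using i applications of ρ₁ and m applications of ψ₂, then |λ| = i + 2m and w̃t(λ) = m, where w̃t(λ) = |{□ ∈ λ : a(□) + 1 ≡ l(□) (mod 3)}|. -/

import Mathlib

/-- A partition, represented as its Young diagram: the weakly decreasing list of
(positive) row lengths, row `0` being the bottom (longest) row. -/
structure YPartition where
  rows : List ℕ
  sorted : rows.Pairwise (· ≥ ·)
  pos : ∀ x ∈ rows, 0 < x

namespace YPartition

/-- The number of boxes of the diagram. -/
def size (p : YPartition) : ℕ := p.rows.sum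

/-- The length of row `i` (zero for rows above the diagram). -/
def row (p : YPartition) (i : ℕ) : ℕ := p.rows.getD i 0

/-- The height `k` of the first column, i.e. the number of rows. -/
def colHeight (p : YPartition) : ℕ := p.rows.length

/-- The length `j` of the first (bottom) row. -/
def rowLen (p : YPartition) : ℕ := p.row 0

/-- The height of column `c` (columns indexed from `0`). -/
def colH (p : YPartition) (c : ℕ) : ℕ :=
  ((Finset.range p.colHeight).filter (fun r => c < p.row r)).card

/-- The arm of the box in row `r` and column `c`: the number of boxes strictly
above it in its column. -/
def arm (p : YPartition) (r c : ℕ) : ℕ :=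
  ((Finset.Ioo r p.colHeight).filter (fun r' => c < p.row r')).card

/-- The leg of the box in row `r` and column `c`: the number of boxes strictly
to its right in its row. -/
def leg (p : YPartition) (r c : ℕ) : ℕ := p.row r - 1 - c

/-- The boxes of the diagram, as (row, column) pairs. -/
def cells (p : YPartition) : Finset (ℕ × ℕ) :=
  (Finset.range p.colHeight ×ˢ Finset.range p.rowLen).filter (fun b => b.2 < p.row b.1)

/-- `w̃t(λ) = #{□ ∈ λ : a(□) + 1 ≡ l(□) (mod 3)}`. -/
def wtt (p : YPartition) : ℕ :=
  (p.cells.filter (fun b => (p.arm b.1 b.2 + 1) % 3 = p.leg b.1 b.2 % 3)).card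

/-- `wt(λ) = #{□ ∈ λ : l(□) > 1 and a(□) + 1 ≡ l(□) (mod 3)}`. -/
def wt (p : YPartition) : ℕ :=
  (p.cells.filter (fun b => 1 < p.leg b.1 b.2 ∧ (p.arm b.1 b.2 + 1) % 3 = p.leg b.1 b.2 % 3)).card

/-- A list of naturals is (the row list of) a well-defined Young diagram iff
it is weakly decreasing with positive entries. -/
def IsYD (l : List ℕ) : Prop := l.Pairwise (· ≥ ·) ∧ ∀ x ∈ l, 0 < x

instance (l : List ℕ) : Decidable (IsYD l) := by unfold IsYD; exact inferInstance

/-- The empty partition. -/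
def emptyP : YPartition := ⟨[], List.Pairwise.nil, by simp⟩

/-- The row list of `ρ₁λ`: remove the first row (length `j`), add one box to it,
and insert the resulting `j + 1` boxes as a new first column. -/
def rho1Rows (p : YPartition) : List ℕ :=
  (List.range (p.rowLen + 1)).map
    (fun i => p.rows.tail.getD i 0 + 1)

/-- The row list of `ψ₂λ`: remove the first column (height `k`), add two boxes
to it, and insert the resulting `k + 2` boxes as a new first row. -/
def psi2Rows (p : YPartition) : List ℕ :=
  (p.colHeight + 2) :: (p.rows.map (· - 1)).filter (fun x => decide (0 < x))

/-- `ρ₁`, as a partially defined map: defined exactly when the new first column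
(height `j + 1`) is at least as high as the rest of the diagram (height `k - 1`),
i.e. when `j ≥ k - 2`. -/
def rho1? (p : YPartition) : Option YPartition :=
  if h : p.colHeight ≤ p.rowLen + 2 ∧ IsYD (rho1Rows p)
  then some ⟨rho1Rows p, h.2.1, h.2.2⟩ else none

/-- `ψ₂`, as a partially defined map: defined exactly when the result is a
well-defined Young diagram, i.e. when `j ≤ k + 3`. -/
def psi2? (p : YPartition) : Option YPartition :=
  if h : IsYD (psi2Rows p) then some ⟨psi2Rows p, h.1, h.2⟩ else none

/-- Apply `ρ₁` (for `a = 1`) or `ψ₂` (for `a = 2`). -/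
def step (a : ℕ) (p : YPartition) : Option YPartition :=
  if a = 1 then rho1? p else psi2? p

/-- Apply a `{1,2}`-word to the empty partition, the leftmost entry being the
first map applied. -/
def applyWord (w : List ℕ) : Option YPartition :=
  w.foldlM (fun p a => step a p) emptyP

end YPartition

namespace YPartition

open Finset

lemma row_antitone (p : YPartition) {r r' : ℕ} (h : r ≤ r') : p.row r' ≤ p.row r := by
  unfold row
  rcases lt_or_ge r' p.rows.length with h2 | h2
  · have h1 : r < p.rows.length := lt_of_le_of_lt h h2
    rw [List.getD_eq_getElem _ _ h1, List.getD_eq_getElem _ _ h2]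
    rcases eq_or_lt_of_le h with rfl | h3
    · exact le_refl _
    · exact List.pairwise_iff_get.mp p.sorted ⟨r, h1⟩ ⟨r', h2⟩ h3
  · rw [List.getD_eq_default _ _ h2]
    exact Nat.zero_le _

lemma row_eq_zero (p : YPartition) {r : ℕ} (h : p.colHeight ≤ r) : p.row r = 0 :=
  List.getD_eq_default _ _ h

lemma row_pos (p : YPartition) {r : ℕ} (h : r < p.colHeight) : 0 < p.row r := by
  have := List.getD_eq_getElem p.rows 0 h
  rw [row, this]
  exact p.pos _ (List.getElem_mem _)

lemma row_le_rowLen (p : YPartition) (r : ℕ) : p.row r ≤ p.rowLen :=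
  p.row_antitone (Nat.zero_le r)

lemma filter_range_eq_range {k : ℕ} {P : ℕ → Prop} [DecidablePred P]
    (hP : ∀ a b, a ≤ b → b < k → P b → P a) :
    (Finset.range k).filter P = Finset.range (((Finset.range k).filter P).card) := by
  ext x
  simp only [mem_filter, mem_range]
  constructor
  · rintro ⟨hx, hPx⟩
    have hsub : Finset.range (x + 1) ⊆ (Finset.range k).filter P := by
      intro a ha
      simp only [mem_range, Nat.lt_succ_iff] at ha
      exact mem_filter.mpr ⟨mem_range.mpr (lt_of_le_of_lt ha hx), hP a x ha hx hPx⟩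
    have := Finset.card_le_card hsub
    simpa using this
  · intro hx
    by_contra hcon
    have hsub : (Finset.range k).filter P ⊆ Finset.range x := by
      intro y hy
      simp only [mem_filter, mem_range] at hy
      simp only [mem_range]
      by_contra hyx
      push_neg at hyx
      exact hcon ⟨lt_of_le_of_lt hyx hy.1, hP x y hyx hy.1 hy.2⟩
    have := Finset.card_le_card hsub
    simp only [card_range] at this
    omega

lemma filter_colH (p : YPartition) (c : ℕ) :
    (Finset.range p.colHeight).filter (fun r => c < p.row r) = Finset.range (p.colH c) := by
  rw [colH]
  exact filter_range_eq_range (fun a b hab _ hb => lt_of_lt_of_le hb (p.row_antitone hab))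

lemma lt_colH_iff (p : YPartition) {r c : ℕ} :
    r < p.colH c ↔ r < p.colHeight ∧ c < p.row r := by
  rw [← Finset.mem_range, ← filter_colH, mem_filter, mem_range]

lemma colH_le (p : YPartition) (c : ℕ) : p.colH c ≤ p.colHeight :=
  le_trans (Finset.card_filter_le _ _) (le_of_eq (card_range _))

lemma colH_eq_zero (p : YPartition) {c : ℕ} (h : p.rowLen ≤ c) : p.colH c = 0 := by
  rw [colH, Finset.card_eq_zero, Finset.filter_eq_empty_iff]
  intro r _
  simp only [not_lt]
  exact le_trans (p.row_le_rowLen r) h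

lemma colH_zero (p : YPartition) : p.colH 0 = p.colHeight := by
  rw [colH, Finset.filter_true_of_mem, card_range]
  intro r hr
  exact p.row_pos (mem_range.mp hr)

lemma arm_eq (p : YPartition) {r c : ℕ} (hr : r < p.colHeight) (hc : c < p.row r) :
    p.arm r c = p.colH c - 1 - r := by
  have h1 : (Finset.Ioo r p.colHeight).filter (fun r' => c < p.row r')
      = (Finset.range p.colHeight).filter (fun r' => c < p.row r' ∧ r < r') := by
    ext x
    simp only [mem_filter, Finset.mem_Ioo, mem_range]
    tauto
  rw [arm, h1, ← Finset.filter_filter, filter_colH]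
  have h2 : (Finset.range (p.colH c)).filter (fun r' => r < r') = Finset.Ioo r (p.colH c) := by
    ext x
    simp only [mem_filter, mem_range, Finset.mem_Ioo]
    tauto
  rw [h2, Nat.card_Ioo]
  omega

end YPartition
namespace YPartition

open Finset

def chi (P : Prop) [Decidable P] : ℤ := if P then 1 else 0

lemma chi_neg {P : Prop} [Decidable P] (h : ¬ P) : chi P = 0 := if_neg h
lemma chi_pos {P : Prop} [Decidable P] (h : P) : chi P = 1 := if_pos h

lemma chi_congr {P Q : Prop} [Decidable P] [Decidable Q] (h : P ↔ Q) : chi P = chi Q := by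
  unfold chi; simp [h]

/-- row statistic mod 3 -/
def rs (p : YPartition) (r : ℕ) : ZMod 3 := ((p.row r + r : ℕ) : ZMod 3)
/-- column statistic mod 3 -/
def cs (p : YPartition) (c : ℕ) : ZMod 3 := ((p.colH c + c + 1 : ℕ) : ZMod 3)

def Wz (p : YPartition) : ℤ :=
  ∑ r ∈ Finset.range p.colHeight, ∑ c ∈ Finset.range (p.row r), chi (cs p c = rs p r)

lemma cond_iff (p : YPartition) {r c : ℕ} (hr : r < p.colHeight) (hc : c < p.row r) :
    ((p.arm r c + 1) % 3 = p.leg r c % 3) ↔ cs p c = rs p r := by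
  have hcolH : r < p.colH c := p.lt_colH_iff.mpr ⟨hr, hc⟩
  have harm : p.arm r c + 1 = p.colH c - r := by rw [p.arm_eq hr hc]; omega
  rw [harm, leg]
  rw [← Nat.ModEq, ← ZMod.natCast_eq_natCast_iff]
  have h1 : ((p.colH c - r : ℕ) : ZMod 3) = (p.colH c : ZMod 3) - (r : ZMod 3) := by
    push_cast [Nat.cast_sub (le_of_lt hcolH)]; ring
  have h2 : ((p.row r - 1 - c : ℕ) : ZMod 3) = (p.row r : ZMod 3) - 1 - (c : ZMod 3) := by
    have : p.row r - 1 - c = p.row r - (1 + c) := by omega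
    rw [this, Nat.cast_sub (by omega)]
    push_cast; ring
  rw [h1, h2, rs, cs]
  push_cast
  constructor <;> intro h <;> linear_combination h

lemma sum_range_ite {M : Type*} [AddCommMonoid M] {n m : ℕ} (h : n ≤ m) (f : ℕ → M) :
    ∑ c ∈ Finset.range m, (if c < n then f c else 0) = ∑ c ∈ Finset.range n, f c := by
  rw [← Finset.sum_filter]
  congr 1
  ext x
  simp only [mem_filter, mem_range]
  omega

lemma wtt_eq_Wz (p : YPartition) : (p.wtt : ℤ) = Wz p := by
  rw [wtt, cells, Finset.filter_filter, Wz]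
  rw [Finset.card_filter]
  push_cast
  rw [Finset.sum_product]
  apply Finset.sum_congr rfl
  intro r hr
  rw [mem_range] at hr
  have h1 : ∀ c ∈ Finset.range p.rowLen,
      (if c < p.row r ∧ (p.arm r c + 1) % 3 = p.leg r c % 3 then (1:ℤ) else 0)
      = (if c < p.row r then chi (cs p c = rs p r) else 0) := by
    intro c _
    by_cases hc : c < p.row r
    · simp only [hc, true_and, if_true, chi]
      exact if_congr (p.cond_iff hr hc) rfl rfl
    · simp [hc]
  rw [Finset.sum_congr rfl h1, sum_range_ite (p.row_le_rowLen r)]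

lemma colH_sum (p : YPartition) (c : ℕ) {A : ℕ} (hA : p.colHeight ≤ A) :
    (p.colH c : ℤ) = ∑ r ∈ Finset.range A, chi (c < p.row r) := by
  rw [colH, Finset.card_filter]
  push_cast
  rw [show A = p.colHeight + (A - p.colHeight) by omega, Finset.sum_range_add]
  have h2 : ∀ i ∈ Finset.range (A - p.colHeight), chi (c < p.row (p.colHeight + i)) = 0 := by
    intro i _
    rw [p.row_eq_zero (by omega)]
    simp [chi]
  rw [Finset.sum_congr rfl h2]
  simp [chi]

end YPartition
namespace YPartition

open Finset

lemma master (p : YPartition) (f : ℕ → ℤ) {A B : ℕ} (hA : p.colHeight ≤ A) (hB : p.rowLen ≤ B) :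
    ∑ r ∈ Finset.range A, f (p.row r + r) + ∑ c ∈ Finset.range B, f c
    = ∑ c ∈ Finset.range B, f (p.colH c + c) + ∑ r ∈ Finset.range A, f r := by
  set g : ℕ → ℤ := fun x => f (x + 1) - f x with hg
  have tele : ∀ a n : ℕ, ∑ c ∈ Finset.range n, g (a + c) = f (a + n) - f a := by
    intro a n
    have := Finset.sum_range_sub (fun i => f (a + i)) n
    simpa [hg, add_assoc] using this
  have hrow : ∑ r ∈ Finset.range A, (f (p.row r + r) - f r)
      = ∑ r ∈ Finset.range p.colHeight, ∑ c ∈ Finset.range (p.row r), g (r + c) := by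
    rw [show A = p.colHeight + (A - p.colHeight) by omega, Finset.sum_range_add]
    have h2 : ∀ i ∈ Finset.range (A - p.colHeight),
        f (p.row (p.colHeight + i) + (p.colHeight + i)) - f (p.colHeight + i) = 0 := by
      intro i _
      rw [p.row_eq_zero (by omega)]
      simp
    rw [Finset.sum_congr rfl h2, Finset.sum_const_zero, add_zero]
    apply Finset.sum_congr rfl
    intro r _
    rw [tele r (p.row r), add_comm r (p.row r)]
  have hcol : ∑ c ∈ Finset.range B, (f (p.colH c + c) - f c)
      = ∑ c ∈ Finset.range p.rowLen, ∑ r ∈ Finset.range (p.colH c), g (c + r) := by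
    rw [show B = p.rowLen + (B - p.rowLen) by omega, Finset.sum_range_add]
    have h2 : ∀ i ∈ Finset.range (B - p.rowLen),
        f (p.colH (p.rowLen + i) + (p.rowLen + i)) - f (p.rowLen + i) = 0 := by
      intro i _
      rw [p.colH_eq_zero (show p.rowLen ≤ p.rowLen + i by omega)]
      simp
    rw [Finset.sum_congr rfl h2, Finset.sum_const_zero, add_zero]
    apply Finset.sum_congr rfl
    intro c _
    rw [tele c (p.colH c), add_comm c (p.colH c)]
  have hswap : ∑ r ∈ Finset.range p.colHeight, ∑ c ∈ Finset.range (p.row r), g (r + c)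
      = ∑ c ∈ Finset.range p.rowLen, ∑ r ∈ Finset.range (p.colH c), g (c + r) := by
    have lhs : ∀ r ∈ Finset.range p.colHeight,
        ∑ c ∈ Finset.range (p.row r), g (r + c)
        = ∑ c ∈ Finset.range p.rowLen, (if c < p.row r then g (r + c) else 0) := by
      intro r _
      rw [sum_range_ite (p.row_le_rowLen r)]
    rw [Finset.sum_congr rfl lhs, Finset.sum_comm]
    apply Finset.sum_congr rfl
    intro c _
    rw [← Finset.sum_filter, filter_colH]
    apply Finset.sum_congr rfl
    intro r _
    rw [add_comm]
  rw [Finset.sum_sub_distrib] at hrow hcol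
  rw [hswap] at hrow
  linarith
end YPartition
namespace YPartition

open Finset

lemma tail_getD (l : List ℕ) (i d : ℕ) : l.tail.getD i d = l.getD (i+1) d := by
  cases l <;> simp [List.getD]

lemma getD_map_range {n : ℕ} (f : ℕ → ℕ) {i : ℕ} (h : i < n) :
    (((List.range n).map f).getD i 0) = f i := by
  rw [List.getD_eq_getElem _ _ (by simpa using h)]
  simp

lemma Wz_ext (p : YPartition) {A : ℕ} (hA : p.colHeight ≤ A) :
    Wz p = ∑ r ∈ Finset.range A, ∑ c ∈ Finset.range (p.row r), chi (cs p c = rs p r) := by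
  rw [Wz, show A = p.colHeight + (A - p.colHeight) by omega, Finset.sum_range_add]
  have h2 : ∀ i ∈ Finset.range (A - p.colHeight),
      ∑ c ∈ Finset.range (p.row (p.colHeight + i)), chi (cs p c = rs p (p.colHeight + i)) = 0 := by
    intro i _
    rw [p.row_eq_zero (by omega)]
    simp
  rw [Finset.sum_congr rfl h2, Finset.sum_const_zero, add_zero]

lemma two_ne_zero' : (2 : ZMod 3) ≠ 0 := by decide

lemma rho1_wtt (p q : YPartition) (hk : p.colHeight ≤ p.rowLen + 2)
    (hq : q.rows = rho1Rows p) : q.wtt = p.wtt := by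
  set j := p.rowLen with hj
  set k := p.colHeight with hkdef
  -- basic facts about q
  have hqh : q.colHeight = j + 1 := by
    rw [colHeight, hq, rho1Rows, List.length_map, List.length_range]
  have hqrow : ∀ r < j + 1, q.row r = p.row (r+1) + 1 := by
    intro r hr
    rw [row, hq, rho1Rows, getD_map_range _ hr, tail_getD]
    rfl
  have hrow0 : p.row 0 = j := rfl
  have hrowle : ∀ r, p.row (r+1) ≤ j := fun r => p.row_antitone (Nat.zero_le _)
  -- column heights of q
  have hq0 : q.colH 0 = j + 1 := by rw [colH_zero, hqh]
  have hqc : ∀ c < j, (p.colH c : ℤ) = (q.colH (c+1) : ℤ) + 1 := by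
    intro c hc
    have h1 : (q.colH (c+1) : ℤ) = ∑ r ∈ Finset.range (j+1), chi (c < p.row (r+1)) := by
      rw [q.colH_sum (c+1) (le_of_eq hqh)]
      apply Finset.sum_congr rfl
      intro r hr
      rw [mem_range] at hr
      rw [hqrow r hr]
      exact chi_congr (by omega)
    have h2 : (p.colH c : ℤ) = ∑ r ∈ Finset.range (j+2), chi (c < p.row r) := p.colH_sum c hk
    rw [h1, h2, Finset.sum_range_succ']
    have h3 : chi (c < p.row 0) = 1 := by rw [hrow0]; simp [chi, hc]
    rw [h3]
  -- statistics transfer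
  have hrs : ∀ r < j + 1, rs q r = rs p (r+1) := by
    intro r hr
    rw [rs, rs, hqrow r hr]
    congr 1
    omega
  have hcs0 : cs q 0 = ((j + 2 : ℕ) : ZMod 3) := by
    rw [cs, hq0]
  have hcsc : ∀ c < j, cs q (c+1) = cs p c := by
    intro c hc
    have h1 := hqc c hc
    rw [cs, cs]
    have : (p.colH c + c + 1 : ℕ) = (q.colH (c+1) + (c+1) + 1 : ℕ) := by
      have : (p.colH c : ℤ) = (q.colH (c+1) : ℤ) + 1 := h1
      omega
    rw [this]
  -- inner sums
  set In : ℕ → ℤ := fun r => ∑ c ∈ Finset.range (p.row r), chi (cs p c = rs p r) with hIn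
  have key : Wz q = (∑ r ∈ Finset.range (j+1), In (r+1))
      + ∑ r ∈ Finset.range (j+1), chi (((j+2:ℕ) : ZMod 3) = rs p (r+1)) := by
    rw [Wz, hqh, ← Finset.sum_add_distrib]
    apply Finset.sum_congr rfl
    intro r hr
    rw [mem_range] at hr
    rw [hqrow r hr, Finset.sum_range_succ']
    congr 1
    · apply Finset.sum_congr rfl
      intro c hc
      rw [mem_range] at hc
      have hcj : c < j := lt_of_lt_of_le hc (hrowle r)
      rw [hcsc c hcj, hrs r hr]
    · rw [hcs0, hrs r hr]
  have hWzp : ∑ r ∈ Finset.range (j+2), In r = Wz p := (p.Wz_ext hk).symm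
  have hIn0 : In 0 = ∑ c ∈ Finset.range j, chi (cs p c = ((j:ℕ) : ZMod 3)) := by
    rw [hIn]
    apply Finset.sum_congr (by rw [hrow0])
    intro c _
    rw [rs, hrow0]
    norm_num
  have hshift1 : ∑ r ∈ Finset.range (j+2), In r = (∑ r ∈ Finset.range (j+1), In (r+1)) + In 0 :=
    Finset.sum_range_succ' In (j+1)
  have hzero : chi (((j+2:ℕ) : ZMod 3) = rs p 0) = 0 := by
    apply chi_neg
    rw [rs, hrow0]
    intro h
    push_cast at h
    exact two_ne_zero' (by linear_combination h)
  have hshift2 : ∑ r ∈ Finset.range (j+2), chi (((j+2:ℕ) : ZMod 3) = rs p r)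
      = (∑ r ∈ Finset.range (j+1), chi (((j+2:ℕ) : ZMod 3) = rs p (r+1))) + chi (((j+2:ℕ) : ZMod 3) = rs p 0) :=
    Finset.sum_range_succ' _ (j+1)
  -- master lemma
  have h3 : (3 : ZMod 3) = 0 := by decide
  have hm := p.master (fun n => chi ((n : ZMod 3) = ((j+2:ℕ) : ZMod 3))) hk (le_refl j)
  have hm1 : ∑ r ∈ Finset.range (j+2), chi (((p.row r + r : ℕ) : ZMod 3) = ((j+2:ℕ) : ZMod 3))
      = ∑ r ∈ Finset.range (j+2), chi (((j+2:ℕ) : ZMod 3) = rs p r) := by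
    apply Finset.sum_congr rfl
    intro r _
    exact chi_congr (by rw [rs]; exact eq_comm)
  have hm2 : ∑ c ∈ Finset.range j, chi (((p.colH c + c : ℕ) : ZMod 3) = ((j+2:ℕ) : ZMod 3))
      = ∑ c ∈ Finset.range j, chi (cs p c = ((j:ℕ) : ZMod 3)) := by
    apply Finset.sum_congr rfl
    intro c _
    apply chi_congr
    rw [cs]
    push_cast
    constructor <;> intro h <;>
      first
      | linear_combination h + h3
      | linear_combination h - h3
  have hwin : ∑ r ∈ Finset.range (j+2), chi (((r:ℕ) : ZMod 3) = ((j+2:ℕ) : ZMod 3))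
      = ∑ c ∈ Finset.range j, chi (((c:ℕ) : ZMod 3) = ((j+2:ℕ) : ZMod 3)) := by
    rw [Finset.sum_range_succ, Finset.sum_range_succ]
    have e1 : chi (((j:ℕ) : ZMod 3) = ((j+2:ℕ) : ZMod 3)) = 0 := by
      apply chi_neg
      intro h; push_cast at h
      exact two_ne_zero' (by linear_combination -h)
    have e2 : chi ((((j+1:ℕ)) : ZMod 3) = ((j+2:ℕ) : ZMod 3)) = 0 := by
      apply chi_neg
      intro h; push_cast at h
      have h2 : (1 : ZMod 3) = 0 := by linear_combination -h
      exact one_ne_zero h2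
    rw [e1, e2, add_zero, add_zero]
  simp only at hm
  rw [hm1, hm2] at hm
  -- conclude
  have hfinal : Wz q = Wz p := by
    rw [key, ← hWzp, hshift1]
    have := hshift2
    rw [hzero, add_zero] at this
    rw [← this, hIn0]
    push_cast at hm hwin ⊢
    linarith
  have := p.wtt_eq_Wz
  have hq2 := q.wtt_eq_Wz
  rw [hfinal, ← this] at hq2
  exact_mod_cast hq2

end YPartition
namespace YPartition

open Finset

lemma filter_map_getD (l : List ℕ) (hs : l.Pairwise (· ≥ ·)) (i : ℕ) :
    ((l.map (· - 1)).filter (fun x => decide (0 < x))).getD i 0 = l.getD i 0 - 1 := by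
  induction l generalizing i with
  | nil => simp [List.getD]
  | cons a t ih =>
    rw [List.pairwise_cons] at hs
    obtain ⟨ha, ht⟩ := hs
    by_cases h2 : 0 < a - 1
    · have hfil : ((a :: t).map (· - 1)).filter (fun x => decide (0 < x))
          = (a - 1) :: (t.map (· - 1)).filter (fun x => decide (0 < x)) := by
        simp [List.filter_cons, h2]
      rw [hfil]
      cases i with
      | zero => simp
      | succ i =>
        rw [List.getD_cons_succ, List.getD_cons_succ]
        exact ih ht i
    · have hfil : ((a :: t).map (· - 1)).filter (fun x => decide (0 < x)) = [] := by
        rw [List.filter_eq_nil_iff]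
        intro x hx
        simp only [List.mem_map, List.mem_cons] at hx
        obtain ⟨y, hy, rfl⟩ := hx
        have hya : y ≤ a := by
          rcases hy with rfl | hy
          · exact le_refl _
          · exact ha y hy
        simp only [decide_eq_true_eq]
        omega
      rw [hfil]
      have hrhs : (a :: t).getD i 0 ≤ 1 := by
        cases i with
        | zero => simpa using (by omega : a ≤ 1)
        | succ i =>
          rw [List.getD_cons_succ]
          rcases lt_or_ge i t.length with hi | hi
          · rw [List.getD_eq_getElem _ _ hi]
            exact le_trans (ha _ (List.getElem_mem _)) (by omega)
          · rw [List.getD_eq_default _ _ hi]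
            omega
      simp only [List.getD_nil]
      omega

lemma one_ne_zero'' : (1 : ZMod 3) ≠ 0 := by decide

lemma psi2_wtt (p q : YPartition) (hq : q.rows = psi2Rows p) : q.wtt = p.wtt + 1 := by
  set k := p.colHeight with hkdef
  have hq0 : q.row 0 = k + 2 := by rw [row, hq, psi2Rows]; rfl
  have hqs : ∀ r, q.row (r+1) = p.row r - 1 := by
    intro r
    rw [row, hq, psi2Rows, List.getD_cons_succ]
    exact filter_map_getD p.rows p.sorted r
  have hqh : q.colHeight ≤ k + 1 := by
    have hk2 : p.rows.length = k := rfl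
    rw [colHeight, hq, psi2Rows, List.length_cons]
    have := List.length_filter_le (fun x => decide (0 < x)) (p.rows.map (· - 1))
    simp only [List.length_map] at this
    omega
  have hrowLen : p.rowLen ≤ k + 3 := by
    have h1 : q.row (0+1) ≤ q.row 0 := q.row_antitone (by omega)
    rw [hqs 0, hq0] at h1
    have h3 : p.rowLen = p.row 0 := rfl
    omega
  have hrowpos : ∀ r < k, 0 < p.row r := fun r hr => p.row_pos hr
  -- column heights
  have hqc : ∀ c < k + 2, (q.colH c : ℤ) = (p.colH (c+1) : ℤ) + 1 := by
    intro c hc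
    rw [q.colH_sum c hqh, Finset.sum_range_succ']
    have h1 : chi (c < q.row 0) = 1 := by rw [hq0]; exact chi_pos hc
    rw [h1, p.colH_sum (c+1) (le_refl k)]
    congr 1
    apply Finset.sum_congr rfl
    intro r _
    rw [hqs r]
    exact chi_congr (by omega)
  have hcs : ∀ c < k + 2, cs q c = cs p (c+1) := by
    intro c hc
    rw [cs, cs]
    have h1 := hqc c hc
    have : (q.colH c + c + 1 : ℕ) = (p.colH (c+1) + (c+1) + 1 : ℕ) := by omega
    rw [this]
  have hrs : ∀ r < k, rs q (r+1) = rs p r := by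
    intro r hr
    rw [rs, rs, hqs r]
    congr 1
    have := hrowpos r hr
    omega
  have hrs0 : rs q 0 = ((k+2 : ℕ) : ZMod 3) := by
    rw [rs, hq0]
  have hcs0 : cs p 0 = ((k+1 : ℕ) : ZMod 3) := by
    rw [cs, p.colH_zero]
  -- decompose Wz q
  have key : Wz q = (∑ r ∈ Finset.range k, ∑ c ∈ Finset.range (p.row r - 1), chi (cs p (c+1) = rs p r))
      + ∑ c ∈ Finset.range (k+2), chi (cs p (c+1) = ((k+2:ℕ) : ZMod 3)) := by
    rw [q.Wz_ext hqh, Finset.sum_range_succ']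
    congr 1
    · apply Finset.sum_congr rfl
      intro r hr
      rw [mem_range] at hr
      rw [hqs r, hrs r hr]
      apply Finset.sum_congr rfl
      intro c hc
      rw [mem_range] at hc
      have hck : c < k + 2 := by
        have h1 : p.row r ≤ p.rowLen := p.row_le_rowLen r
        omega
      rw [hcs c hck]
    · rw [hq0, hrs0]
      apply Finset.sum_congr rfl
      intro c hc
      rw [mem_range] at hc
      rw [hcs c hc]
  -- relate first part to Wz p
  have hpart1 : ∀ r < k, ∑ c ∈ Finset.range (p.row r), chi (cs p c = rs p r)
      = (∑ c ∈ Finset.range (p.row r - 1), chi (cs p (c+1) = rs p r)) + chi (((k+1:ℕ) : ZMod 3) = rs p r) := by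
    intro r hr
    have h1 : p.row r = (p.row r - 1) + 1 := by have := hrowpos r hr; omega
    conv_lhs => rw [h1]
    rw [Finset.sum_range_succ', hcs0]
  have hWzp : Wz p = (∑ r ∈ Finset.range k, ∑ c ∈ Finset.range (p.row r - 1), chi (cs p (c+1) = rs p r))
      + ∑ r ∈ Finset.range k, chi (((k+1:ℕ) : ZMod 3) = rs p r) := by
    rw [Wz, ← hkdef, ← Finset.sum_add_distrib]
    apply Finset.sum_congr rfl
    intro r hr
    rw [mem_range] at hr
    exact hpart1 r hr
  -- relate second part
  have hshiftB : ∑ c ∈ Finset.range (k+3), chi (cs p c = ((k+2:ℕ) : ZMod 3))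
      = (∑ c ∈ Finset.range (k+2), chi (cs p (c+1) = ((k+2:ℕ) : ZMod 3))) + chi (cs p 0 = ((k+2:ℕ) : ZMod 3)) :=
    Finset.sum_range_succ' _ (k+2)
  have hzero : chi (cs p 0 = ((k+2:ℕ) : ZMod 3)) = 0 := by
    apply chi_neg
    rw [hcs0]
    intro h
    push_cast at h
    exact one_ne_zero'' (by linear_combination -h)
  -- master lemma
  have hm := p.master (fun n => chi ((n : ZMod 3) = ((k+1:ℕ) : ZMod 3))) (le_refl k) hrowLen
  simp only at hm
  have hm1 : ∑ r ∈ Finset.range k, chi (((p.row r + r : ℕ) : ZMod 3) = ((k+1:ℕ) : ZMod 3))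
      = ∑ r ∈ Finset.range k, chi (((k+1:ℕ) : ZMod 3) = rs p r) := by
    apply Finset.sum_congr rfl
    intro r _
    exact chi_congr (by rw [rs]; exact eq_comm)
  have hm2 : ∑ c ∈ Finset.range (k+3), chi (((p.colH c + c : ℕ) : ZMod 3) = ((k+1:ℕ) : ZMod 3))
      = ∑ c ∈ Finset.range (k+3), chi (cs p c = ((k+2:ℕ) : ZMod 3)) := by
    apply Finset.sum_congr rfl
    intro c _
    apply chi_congr
    rw [cs]
    push_cast
    constructor <;> intro h <;> linear_combination h
  have hwin : ∑ c ∈ Finset.range (k+3), chi (((c:ℕ) : ZMod 3) = ((k+1:ℕ) : ZMod 3))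
      = (∑ r ∈ Finset.range k, chi (((r:ℕ) : ZMod 3) = ((k+1:ℕ) : ZMod 3))) + 1 := by
    rw [Finset.sum_range_succ, Finset.sum_range_succ, Finset.sum_range_succ]
    have e1 : chi (((k:ℕ) : ZMod 3) = ((k+1:ℕ) : ZMod 3)) = 0 := by
      apply chi_neg
      intro h; push_cast at h
      exact one_ne_zero'' (by linear_combination -h)
    have e2 : chi (((k+1:ℕ) : ZMod 3) = ((k+1:ℕ) : ZMod 3)) = 1 := chi_pos rfl
    have e3 : chi (((k+2:ℕ) : ZMod 3) = ((k+1:ℕ) : ZMod 3)) = 0 := by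
      apply chi_neg
      intro h; push_cast at h
      exact one_ne_zero'' (by linear_combination h)
    push_cast at e1 e2 e3 ⊢
    rw [e1, e2, e3]
    ring
  rw [hm1, hm2] at hm
  have hfinal : Wz q = Wz p + 1 := by
    rw [key, hWzp]
    have hB : ∑ c ∈ Finset.range (k+2), chi (cs p (c+1) = ((k+2:ℕ) : ZMod 3))
        = ∑ c ∈ Finset.range (k+3), chi (cs p c = ((k+2:ℕ) : ZMod 3)) := by
      rw [hshiftB, hzero, add_zero]
    rw [hB]
    push_cast at hm hwin ⊢
    linarith
  have h1 := p.wtt_eq_Wz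
  have h2 := q.wtt_eq_Wz
  rw [hfinal, ← h1] at h2
  exact_mod_cast h2

end YPartition
namespace YPartition

open Finset

lemma list_range_map_sum (n : ℕ) (f : ℕ → ℕ) :
    ((List.range n).map f).sum = ∑ i ∈ Finset.range n, f i := by
  induction n with
  | zero => simp
  | succ n ih => rw [List.range_succ, List.map_append, List.sum_append, Finset.sum_range_succ, ih]; simp

lemma getD_sum (l : List ℕ) : ∀ {n : ℕ}, l.length ≤ n → ∑ i ∈ Finset.range n, l.getD i 0 = l.sum := by
  induction l with
  | nil => intro n _; simp [List.getD]
  | cons a t ih =>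
    intro n hn
    match n, hn with
    | (m+1), hn =>
      rw [Finset.sum_range_succ']
      have h1 : ∀ i ∈ Finset.range m, (a :: t).getD (i+1) 0 = t.getD i 0 := by
        intro i _; rw [List.getD_cons_succ]
      rw [Finset.sum_congr rfl h1, ih (by simpa using hn)]
      simp [add_comm]

lemma sum_head_tail (l : List ℕ) : l.sum = l.getD 0 0 + l.tail.sum := by
  cases l <;> simp [List.getD]

lemma rho1_size (p q : YPartition) (hk : p.colHeight ≤ p.rowLen + 2)
    (hq : q.rows = rho1Rows p) : q.size = p.size + 1 := by
  have htl : p.rows.tail.length ≤ p.rowLen + 1 := by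
    have h1 : p.rows.tail.length = p.rows.length - 1 := List.length_tail
    have h2 : p.rows.length = p.colHeight := rfl
    omega
  have h3 : q.size = ∑ i ∈ Finset.range (p.rowLen + 1), (p.rows.tail.getD i 0 + 1) := by
    rw [size, hq, rho1Rows, list_range_map_sum]
  rw [h3, Finset.sum_add_distrib, Finset.sum_const, getD_sum _ htl]
  have h4 : p.size = p.rows.getD 0 0 + p.rows.tail.sum := sum_head_tail p.rows
  have h5 : p.rowLen = p.rows.getD 0 0 := rfl
  simp only [smul_eq_mul, mul_one, card_range]
  omega

lemma sum_filter_pos (l : List ℕ) : (l.filter (fun x => decide (0 < x))).sum = l.sum := by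
  induction l with
  | nil => rfl
  | cons a t ih =>
    rw [List.filter_cons]
    by_cases h : 0 < a
    · simp [h, List.sum_cons, ih]
    · have ha : a = 0 := by omega
      simp [ha, ih]

lemma sum_map_pred (l : List ℕ) (h : ∀ x ∈ l, 0 < x) :
    (l.map (· - 1)).sum + l.length = l.sum := by
  induction l with
  | nil => rfl
  | cons a t ih =>
    simp only [List.map_cons, List.sum_cons, List.length_cons]
    have ha : 0 < a := h a List.mem_cons_self
    have := ih (fun x hx => h x (List.mem_cons_of_mem a hx))
    omega

lemma psi2_size (p q : YPartition) (hq : q.rows = psi2Rows p) : q.size = p.size + 2 := by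
  have h1 : q.size = (p.colHeight + 2) + ((p.rows.map (· - 1)).filter (fun x => decide (0 < x))).sum := by
    rw [size, hq, psi2Rows, List.sum_cons]
  rw [h1, sum_filter_pos]
  have h2 := sum_map_pred p.rows p.pos
  have h3 : (p.rows.map (· - 1)).length = p.rows.length := List.length_map _
  have h4 : p.colHeight = p.rows.length := rfl
  have h5 : p.size = p.rows.sum := rfl
  omega

end YPartition
namespace YPartition

open Finset

lemma rho1_spec {p q : YPartition} (h : rho1? p = some q) :
    p.colHeight ≤ p.rowLen + 2 ∧ q.rows = rho1Rows p := by
  rw [rho1?] at h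
  split at h
  · rename_i hcond
    cases h
    exact ⟨hcond.1, rfl⟩
  · exact absurd h (by simp)

lemma psi2_spec {p q : YPartition} (h : psi2? p = some q) : q.rows = psi2Rows p := by
  rw [psi2?] at h
  split at h
  · cases h; rfl
  · exact absurd h (by simp)

lemma emptyP_size : emptyP.size = 0 := rfl

lemma emptyP_wtt : emptyP.wtt = 0 := by
  rw [wtt, cells]
  have : emptyP.colHeight = 0 := rfl
  rw [this]
  simp

lemma foldl_invariant : ∀ (w : List ℕ), (∀ a ∈ w, a = 1 ∨ a = 2) → ∀ p₀ p : YPartition,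
    (w.foldlM (fun p a => step a p) p₀ = some p) →
    p.size = p₀.size + (w.count 1 + 2 * w.count 2) ∧ p.wtt = p₀.wtt + w.count 2 := by
  intro w
  induction w with
  | nil =>
    intro _ p₀ p h
    simp only [List.foldlM_nil, pure, Option.some_inj] at h
    subst h
    simp
  | cons a t ih =>
    intro hw p₀ p h
    rw [List.foldlM_cons] at h
    cases hs : step a p₀ with
    | none => rw [hs] at h; simp at h
    | some p₁ =>
      rw [hs] at h
      simp only [Option.bind_eq_bind, Option.bind_some] at h
      have ht := ih (fun b hb => hw b (List.mem_cons_of_mem a hb)) p₁ p h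
      rcases hw a List.mem_cons_self with rfl | rfl
      · rw [step, if_pos rfl] at hs
        obtain ⟨hk, hrows⟩ := rho1_spec hs
        have h1 := rho1_wtt p₀ p₁ hk hrows
        have h2 := rho1_size p₀ p₁ hk hrows
        simp only [List.count_cons]
        norm_num
        omega
      · rw [step, if_neg (by norm_num)] at hs
        have hrows := psi2_spec hs
        have h1 := psi2_wtt p₀ p₁ hrows
        have h2 := psi2_size p₀ p₁ hrows
        simp only [List.count_cons]
        norm_num
        omega

end YPartition



open YPartition in
/-- if `λ` decomposes as a word in `ρ₁` (= `1`) and `ψ₂` (= `2`)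
applied to the empty partition, with `i` occurrences of `ρ₁` and `m` of `ψ₂`,
then `|λ| = i + 2m` and `w̃t(λ) = m`. -/
theorem size_and_wtt_of_word (w : List ℕ) (hw : ∀ a ∈ w, a = 1 ∨ a = 2)
    (p : YPartition) (h : applyWord w = some p) :
    p.size = w.count 1 + 2 * w.count 2 ∧ p.wtt = w.count 2 := by
  have h0 := YPartition.foldl_invariant w hw YPartition.emptyP p h
  rw [YPartition.emptyP_size, YPartition.emptyP_wtt] at h0
  omega
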